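/- arXiv:1910.04914 — 3 statements merged into one kernel-verified Lean document; each statement's English description precedes it below -/
import Mathlib

section
/- Let $\{(\Omega_i,\Sigma_i,\mu_i)\}_{i\in\mathbb{N}}$ be a sequence of measure spaces and suppose $\mathscr{C}$ and $\{\mathscr{C}_n\}_{n\in\mathbb{N}}$ are finite rectangles with the $\mathscr{C}_n$ pairwise disjoint and $\mathscr{C} = \biguplus_{n\in\mathbb{N}} \mathscr{C}_n$. Then $\mathrm{vol}(\mathscr{C}) = \sum_{n\in\mathbb{N}} \mathrm{vol}(\mathscr{C}_n)$ (countable additivity of the volume function on finite rectangles). -/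
open MeasureTheory Filter Set
open scoped ENNReal

/-- `HasVol μ C v` says that the rectangle `∏ᵢ Cᵢ` is a *finite rectangle*:
all sides are measurable with finite measure and the infinite product
`∏ᵢ μᵢ(Cᵢ)` converges to the finite value `v ∈ [0,∞)` (its volume). -/
def HasVol {Ω : ℕ → Type*} [∀ i, MeasurableSpace (Ω i)]
    (μ : ∀ i, Measure (Ω i)) (C : ∀ i, Set (Ω i)) (v : ℝ) : Prop :=
  (∀ i, MeasurableSet (C i)) ∧ (∀ i, μ i (C i) ≠ ∞) ∧
    Tendsto (fun m => ∏ i ∈ Finset.range m, (μ i (C i)).toReal) atTop (nhds v)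

/-!
If `vol C = 0`, every piece has volume at most `vol C`. Otherwise every side `Cᵢ` has
positive finite measure, and conditioning `μᵢ` on `Cᵢ` gives probability measures `νᵢ`.
Their infinite product `P` gives a measurable rectangle `∏ Eᵢ` the mass
`lim ∏_{i<m} νᵢ(Eᵢ)`, so `P(∏ Cᵢ) = 1` and `P(∏ Dₙᵢ) = vol(Dₙ) / vol(C)`: a nonempty
piece has its sides inside those of `C`, an empty one has volume `0`. Countable additivity
of `P` is then the claim.
-/

open ProbabilityTheory
open scoped Topology

lemma hasSum_measureReal_iUnion {α : Type*} [MeasurableSpace α] (μ : Measure α)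
    [IsFiniteMeasure μ] {s : ℕ → Set α} (hs : ∀ n, MeasurableSet (s n))
    (hd : Pairwise (Function.onFun Disjoint s)) :
    HasSum (fun n => μ.real (s n)) (μ.real (⋃ n, s n)) := by
  have hfin : ∑' n, μ (s n) ≠ ∞ := by
    rw [← measure_iUnion hd hs]
    exact measure_ne_top μ _
  simpa only [measureReal_def, measure_iUnion hd hs, ENNReal.tsum_toReal_eq
    (ENNReal.ne_top_of_tsum_ne_top hfin)] using ENNReal.hasSum_toReal hfin

section InfinitePi

variable {X : ℕ → Type*} [∀ i, MeasurableSpace (X i)]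

lemma tendsto_prod_range_infinitePi_univ_pi (ν : ∀ i, Measure (X i))
    [∀ i, IsProbabilityMeasure (ν i)] {E : ∀ i, Set (X i)} (hE : ∀ i, MeasurableSet (E i)) :
    Tendsto (fun m => ∏ i ∈ Finset.range m, ν i (E i)) atTop
      (𝓝 (Measure.infinitePi ν (univ.pi E))) := by
  have hpi : univ.pi E = ⋂ m, (Finset.range m : Set ℕ).pi E := by
    ext x
    simp only [Set.mem_pi, mem_univ, forall_const, mem_iInter, Finset.coe_range, mem_Iio]
    exact ⟨fun h _ i _ => h i, fun h i => h (i + 1) i (Nat.lt_succ_self i)⟩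
  simp_rw [← Measure.infinitePi_pi ν (fun i _ => hE i), hpi]
  refine tendsto_measure_iInter_atTop (fun m => (MeasurableSet.pi (Finset.countable_toSet _)
    fun i _ => hE i).nullMeasurableSet) (fun a b hab => ?_) ⟨0, measure_ne_top _ _⟩
  exact pi_mono' (fun _ _ => subset_rfl) (by simpa using hab)

end InfinitePi

namespace HasVol

variable {Ω : ℕ → Type*} [∀ i, MeasurableSpace (Ω i)] {μ : ∀ i, Measure (Ω i)}
  {C D : ∀ i, Set (Ω i)} {v w : ℝ}

lemma nonneg (hC : HasVol μ C v) : 0 ≤ v :=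
  ge_of_tendsto' hC.2.2 fun _ => Finset.prod_nonneg fun _ _ => ENNReal.toReal_nonneg

lemma eq_zero_of_measure_eq_zero (hC : HasVol μ C v) {i : ℕ} (hi : μ i (C i) = 0) : v = 0 := by
  refine tendsto_nhds_unique hC.2.2 (tendsto_const_nhds.congr' ?_)
  filter_upwards [eventually_gt_atTop i] with m hm
  exact (Finset.prod_eq_zero (Finset.mem_range.mpr hm) (by simp [hi])).symm

lemma measure_ne_zero (hC : HasVol μ C v) (hv : v ≠ 0) (i : ℕ) : μ i (C i) ≠ 0 :=
  fun hi => hv (hC.eq_zero_of_measure_eq_zero hi)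

lemma le_of_univ_pi_subset (hD : HasVol μ D w) (hC : HasVol μ C v)
    (hDC : univ.pi D ⊆ univ.pi C) : w ≤ v := by
  rcases univ_pi_subset_univ_pi_iff.mp hDC with hDC | ⟨i, hi⟩
  · refine le_of_tendsto_of_tendsto' hD.2.2 hC.2.2 fun m => ?_
    exact Finset.prod_le_prod (fun _ _ => ENNReal.toReal_nonneg) fun i _ =>
      ENNReal.toReal_mono (hC.2.1 i) (measure_mono (hDC i))
  · rw [hD.eq_zero_of_measure_eq_zero (i := i) (by simp [hi])]
    exact hC.nonneg

lemma cond (hD : HasVol μ D w) (hC : HasVol μ C v) (hv : v ≠ 0) (hDC : ∀ i, D i ⊆ C i) :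
    HasVol (fun i => (μ i)[|C i]) D (w / v) := by
  have hfactor : ∀ i,
      ((μ i)[|C i] (D i)).toReal = (μ i (D i)).toReal / (μ i (C i)).toReal := by
    intro i
    rw [cond_apply (hC.1 i), inter_eq_right.mpr (hDC i), ENNReal.toReal_mul,
      ENNReal.toReal_inv, div_eq_inv_mul]
  refine ⟨hD.1, fun i => measure_ne_top _ _, ?_⟩
  simp_rw [hfactor, Finset.prod_div_distrib]
  exact hD.2.2.div hC.2.2 hv

lemma infinitePi_real_univ_pi [∀ i, IsProbabilityMeasure (μ i)] (hC : HasVol μ C v) :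
    (Measure.infinitePi μ).real (univ.pi C) = v := by
  have h := (ENNReal.tendsto_toReal (measure_ne_top _ _)).comp
    (tendsto_prod_range_infinitePi_univ_pi μ hC.1)
  simp only [Function.comp_def, ENNReal.toReal_prod] at h
  exact tendsto_nhds_unique h hC.2.2

end HasVol

theorem stmt_6 {Ω : ℕ → Type*} [∀ i, MeasurableSpace (Ω i)] (μ : ∀ i, Measure (Ω i))
    (C : ∀ i, Set (Ω i)) (v : ℝ) (hC : HasVol μ C v)
    (D : ℕ → ∀ i, Set (Ω i)) (w : ℕ → ℝ) (hD : ∀ n, HasVol μ (D n) (w n))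
    (hdisj : Pairwise (Function.onFun Disjoint (fun n => Set.univ.pi (D n))))
    (hunion : Set.univ.pi C = ⋃ n, Set.univ.pi (D n)) :
    HasSum w v := by
  have hsub : ∀ n, univ.pi (D n) ⊆ univ.pi C := fun n =>
    hunion ▸ subset_iUnion (fun k => univ.pi (D k)) n
  rcases eq_or_ne v 0 with rfl | hv
  · have hw : w = 0 := funext fun n =>
      le_antisymm ((hD n).le_of_univ_pi_subset hC (hsub n)) (hD n).nonneg
    exact hw ▸ hasSum_zero
  have : ∀ i, IsProbabilityMeasure ((μ i)[|C i]) := fun i =>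
    cond_isProbabilityMeasure_of_finite (hC.measure_ne_zero hv i) (hC.2.1 i)
  set P := Measure.infinitePi fun i => (μ i)[|C i]
  have hPD : ∀ n, P.real (univ.pi (D n)) = w n / v := by
    intro n
    rcases univ_pi_subset_univ_pi_iff.mp (hsub n) with hDC | ⟨i, hi⟩
    · exact ((hD n).cond hC hv hDC).infinitePi_real_univ_pi
    · rw [univ_pi_eq_empty hi, measureReal_empty,
        (hD n).eq_zero_of_measure_eq_zero (i := i) (by simp [hi]), zero_div]
  have hPC : P.real (univ.pi C) = v / v :=
    (hC.cond hC hv fun _ => subset_rfl).infinitePi_real_univ_pi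
  have hsum := hasSum_measureReal_iUnion P (fun n => MeasurableSet.univ_pi (hD n).1) hdisj
  rw [← hunion, hPC] at hsum
  simp_rw [hPD] at hsum
  simpa only [mul_div_cancel₀ _ hv] using hsum.mul_left v
end

section
/- Let $\{(\Omega_i,\Sigma_i,\mu_i)\}_{i\in\mathbb{N}}$ be a sequence of measure spaces, $\mathscr{C}$ a finite rectangle and $\{\mathscr{C}_n\}_{n\in\mathbb{N}}$ finite rectangles (not necessarily disjoint) with $\mathscr{C} \subset \bigcup_{n\in\mathbb{N}} \mathscr{C}_n$. Then $\mathrm{vol}(\mathscr{C}) \le \sum_{n\in\mathbb{N}} \mathrm{vol}(\mathscr{C}_n)$ (countable subadditivity of the volume function on finite rectangles). -/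
/-! Normalise each `μᵢ` to the conditional probability `μᵢ[·|Cᵢ]`. Under the infinite product of
these probability measures the cylinder `∏ᵢ Dᵢ` has measure `∏ᵢ μᵢ[Dᵢ|Cᵢ]`, so countable
subadditivity of that measure gives `1 ≤ ∑ₙ ∏ᵢ μᵢ[Dₙᵢ|Cᵢ]`. Multiplying by `vol 𝒞` and using
`μᵢ(Cᵢ) μᵢ[Dᵢ|Cᵢ] = μᵢ(Cᵢ ∩ Dᵢ) ≤ μᵢ(Dᵢ)` factorwise bounds the `n`-th term by `vol 𝒞ₙ`. -/

open MeasureTheory Filter Set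
open scoped ENNReal

open ProbabilityTheory

theorem ENNReal.tprod_le_prod_of_le_one {α : Type*} {f : α → ℝ≥0∞} (hf : ∀ i, f i ≤ 1)
    (s : Finset α) : ∏' i, f i ≤ ∏ i ∈ s, f i := by
  rw [ENNReal.tprod_eq_iInf_prod hf]
  exact iInf_le _ s

theorem tprod_measure_le_tsum_tprod_of_pi_subset {ι κ : Type*} [Countable ι] [Countable κ]
    {X : ι → Type*} [∀ i, MeasurableSpace (X i)]
    (ν : ∀ i, Measure (X i)) [∀ i, IsProbabilityMeasure (ν i)]
    {B : ∀ i, Set (X i)} (hB : ∀ i, MeasurableSet (B i))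
    {E : κ → ∀ i, Set (X i)} (hE : ∀ n i, MeasurableSet (E n i))
    (hcover : univ.pi B ⊆ ⋃ n, univ.pi (E n)) :
    ∏' i, ν i (B i) ≤ ∑' n, ∏' i, ν i (E n i) := by
  simp only [← Measure.infinitePi_pi_univ ν hB, ← Measure.infinitePi_pi_univ ν (hE _)]
  exact (measure_mono hcover).trans (measure_iUnion_le _)

namespace HasVol

variable {Ω : ℕ → Type*} [∀ i, MeasurableSpace (Ω i)] {μ : ∀ i, Measure (Ω i)}
  {C D : ∀ i, Set (Ω i)} {v w : ℝ}

theorem tendsto_prod_range (h : HasVol μ C v) :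
    Tendsto (fun m => ∏ i ∈ Finset.range m, μ i (C i)) atTop (nhds (ENNReal.ofReal v)) := by
  refine ((ENNReal.continuous_ofReal.tendsto v).comp h.2.2).congr fun m => ?_
  simp only [Function.comp_apply, ← ENNReal.toReal_prod]
  exact ENNReal.ofReal_toReal (ENNReal.prod_ne_top fun i _ => h.2.1 i)

theorem ofReal_eq_zero_of_measure_eq_zero (h : HasVol μ C v) {j : ℕ} (hj : μ j (C j) = 0) :
    ENNReal.ofReal v = 0 := by
  refine tendsto_nhds_unique h.tendsto_prod_range (tendsto_const_nhds.congr' ?_)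
  filter_upwards [eventually_gt_atTop j] with m hm
  exact (Finset.prod_eq_zero (Finset.mem_range.mpr hm) hj).symm

theorem ofReal_mul_tprod_cond_le (hC : HasVol μ C v) (hD : HasVol μ D w)
    (hC₀ : ∀ i, μ i (C i) ≠ 0) :
    ENNReal.ofReal v * ∏' i, (μ i)[D i | C i] ≤ ENNReal.ofReal w := by
  have := fun i => cond_isProbabilityMeasure_of_finite (hC₀ i) (hC.2.1 i)
  have hpartial : ∀ m, (∏ i ∈ Finset.range m, μ i (C i)) * ∏' i, (μ i)[D i | C i]
      ≤ ∏ i ∈ Finset.range m, μ i (D i) := fun m =>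
    calc (∏ i ∈ Finset.range m, μ i (C i)) * ∏' i, (μ i)[D i | C i]
        ≤ (∏ i ∈ Finset.range m, μ i (C i)) * ∏ i ∈ Finset.range m, (μ i)[D i | C i] := by
          gcongr
          exact ENNReal.tprod_le_prod_of_le_one (fun i => prob_le_one) _
      _ = ∏ i ∈ Finset.range m, μ i (C i ∩ D i) := by
          rw [← Finset.prod_mul_distrib]
          exact Finset.prod_congr rfl fun i _ => by
            rw [mul_comm, cond_mul_eq_inter' (hC.1 i) (hC.2.1 i)]
      _ ≤ ∏ i ∈ Finset.range m, μ i (D i) := by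
          gcongr
          exact inter_subset_right
  refine le_of_tendsto_of_tendsto' ?_ hD.tendsto_prod_range hpartial
  exact ENNReal.Tendsto.mul_const hC.tendsto_prod_range
    (.inr (ne_top_of_le_ne_top ENNReal.one_ne_top (tprod_le_one fun i => prob_le_one)))

end HasVol

theorem stmt_7 {Ω : ℕ → Type*} [∀ i, MeasurableSpace (Ω i)] (μ : ∀ i, Measure (Ω i))
    (C : ∀ i, Set (Ω i)) (v : ℝ) (hC : HasVol μ C v)
    (D : ℕ → ∀ i, Set (Ω i)) (w : ℕ → ℝ) (hD : ∀ n, HasVol μ (D n) (w n))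
    (hcover : Set.univ.pi C ⊆ ⋃ n, Set.univ.pi (D n)) :
    ENNReal.ofReal v ≤ ∑' n, ENNReal.ofReal (w n) := by
  by_cases hnull : ∃ j, μ j (C j) = 0
  · obtain ⟨j, hj⟩ := hnull
    rw [hC.ofReal_eq_zero_of_measure_eq_zero hj]
    exact zero_le
  push Not at hnull
  have := fun i => cond_isProbabilityMeasure_of_finite (hnull i) (hC.2.1 i)
  have hone : 1 ≤ ∑' n, ∏' i, (μ i)[D n i | C i] := by
    simpa [cond_apply_self (hnull _) (hC.2.1 _)] using
      tprod_measure_le_tsum_tprod_of_pi_subset (fun i => (μ i)[|C i]) hC.1 (fun n => (hD n).1)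
        hcover
  calc ENNReal.ofReal v ≤ ENNReal.ofReal v * ∑' n, ∏' i, (μ i)[D n i | C i] :=
        le_mul_of_one_le_right' hone
    _ = ∑' n, ENNReal.ofReal v * ∏' i, (μ i)[D n i | C i] := ENNReal.tsum_mul_left.symm
    _ ≤ ∑' n, ENNReal.ofReal (w n) :=
        ENNReal.tsum_le_tsum fun n => hC.ofReal_mul_tprod_cond_le (hD n) hnull
end

section
/- If each space $(\Omega_i,\Sigma_i,\mu_i)$ contains measurable subsets $A_i, B_i$ with $A_i \cap B_i = \varnothing$ and $\mu_i(A_i) = \mu_i(B_i) = 1$, then the infinite product measure $\bigotimes_{i\in\mathbb{N}}\mu_i$ (satisfying $\bigotimes_i\mu_i(\prod_i \mathscr{C}_i) = \prod_i \mu_i(\mathscr{C}_i)$ on finite rectangles) is not $\sigma$-finite. -/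
open MeasureTheory Filter Set
open scoped ENNReal

lemma uncountable_nat_bool : Uncountable (ℕ → Bool) := by
  classical
  have h : Function.Injective (fun s : Set ℕ => fun n => decide (n ∈ s)) := by
    intro s t hst
    ext n
    have := congrFun hst n
    simpa using this
  have : Uncountable (Set ℕ) := by
    rw [← not_countable_iff]
    intro hc
    obtain ⟨f, hf⟩ := Countable.exists_injective_nat (Set ℕ)
    exact Function.cantor_injective f hf
  exact h.uncountable

theorem stmt_12 {Ω : ℕ → Type*} [∀ i, MeasurableSpace (Ω i)] (μ : ∀ i, Measure (Ω i))
    (ν : Measure (∀ i, Ω i))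
    (hν : ∀ (C : ∀ i, Set (Ω i)) (v : ℝ), HasVol μ C v →
      ν (Set.univ.pi C) = ENNReal.ofReal v)
    (A B : ∀ i, Set (Ω i)) (hA : ∀ i, MeasurableSet (A i)) (hB : ∀ i, MeasurableSet (B i))
    (hAB : ∀ i, A i ∩ B i = ∅)
    (hA1 : ∀ i, μ i (A i) = 1) (hB1 : ∀ i, μ i (B i) = 1) :
    ¬ SigmaFinite ν := by
  intro hsf
  set C : (ℕ → Bool) → ∀ i, Set (Ω i) := fun f i => if f i then A i else B i with hC
  have hCmeas : ∀ f i, MeasurableSet (C f i) := by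
    intro f i; simp only [hC]; split <;> [exact hA i; exact hB i]
  have hC1 : ∀ f i, μ i (C f i) = 1 := by
    intro f i; simp only [hC]; split <;> [exact hA1 i; exact hB1 i]
  have hvol : ∀ f, HasVol μ (C f) 1 := by
    intro f
    refine ⟨hCmeas f, fun i => by simp [hC1 f i], ?_⟩
    have : (fun m => ∏ i ∈ Finset.range m, (μ i (C f i)).toReal) = fun _ => 1 := by
      funext m; simp [hC1 f]
    rw [this]; exact tendsto_const_nhds
  have hν1 : ∀ f, ν (Set.univ.pi (C f)) = 1 := by
    intro f; rw [hν (C f) 1 (hvol f)]; simp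
  have hdisj : Pairwise (Function.onFun Disjoint fun f => Set.univ.pi (C f)) := by
    intro f g hfg
    obtain ⟨i, hi⟩ : ∃ i, f i ≠ g i := by
      by_contra h; push_neg at h; exact hfg (funext h)
    refine Set.disjoint_left.mpr fun x hxf hxg => ?_
    have h1 := hxf i (mem_univ i)
    have h2 := hxg i (mem_univ i)
    have hni : x i ∉ A i ∩ B i := by rw [hAB i]; exact Set.notMem_empty _
    simp only [hC] at h1 h2
    rcases Bool.eq_false_or_eq_true (f i) with hf | hf <;>
      rcases Bool.eq_false_or_eq_true (g i) with hg | hg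
    · exact hi (hf.trans hg.symm)
    · rw [hf] at h1; rw [hg] at h2; simp at h1 h2; exact hni ⟨h1, h2⟩
    · rw [hf] at h1; rw [hg] at h2; simp at h1 h2; exact hni ⟨h2, h1⟩
    · exact hi (hf.trans hg.symm)
  have hcnt : Set.Countable {f : ℕ → Bool | 0 < ν (Set.univ.pi (C f))} :=
    MeasureTheory.Measure.countable_meas_pos_of_disjoint_iUnion
      (fun f => MeasurableSet.univ_pi (hCmeas f)) hdisj
  have heq : {f : ℕ → Bool | 0 < ν (Set.univ.pi (C f))} = Set.univ := by
    ext f; simp [hν1 f]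
  rw [heq] at hcnt
  have := uncountable_nat_bool
  exact Set.not_countable_univ hcnt
end
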